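/- Let q ∈ (1,∞), κ ∈ [0,1], and define A(ξ) := (κ + |ξ|)^{q−2} ξ and F(ξ) := (κ + |ξ|)^{(q−2)/2} ξ for ξ ∈ ℝ^{n×n}. Then uniformly in P, Q ∈ ℝ^{n×n}: (A(P) − A(Q)) : (P − Q) ∼ |F(P) − F(Q)|² ∼ (κ + |P| + |Q|)^{q−2} |P − Q|², with implicit constants depending only on q (and κ ≤ 1). -/

import Mathlib

/-!
Write `A_γ ξ = (κ + |ξ|)^γ ξ` (this is `powerMap γ κ`), so that `A = A_{q-2}` and
`F = A_{(q-2)/2}`.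

For `γ > -1` and reals `y ≤ x`, `A_γ x - A_γ y` is comparable to `(κ + |x| + |y|)^γ (x - y)`.
When `0 ≤ y ≤ x` this is Bernoulli's inequality applied to the ratio of `κ + x` and `κ + y`;
when `x` and `y` have opposite signs the two terms of `A_γ x - A_γ y` have the same sign and the
one at `max |x| |y|` dominates. Multiplying by `x - y`, resp. squaring, gives the one-dimensional
case.

In an inner product space, once `|P|` and `|Q|` are fixed, `⟪A_γ P - A_γ Q, P - Q⟫`,
`|A_γ P - A_γ Q|²` and `|P - Q|²` are affine functions of `⟪P, Q⟫ ∈ [-|P||Q|, |P||Q|]`, whose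
values at the two endpoints are those of the scalar pairs `(|P|, ±|Q|)`.
-/

/-- The tensor `A(ξ) = (κ + |ξ|)^{q−2} ξ` on `ℝ^{n×n}` (modeled as the Euclidean
space indexed by `Fin n × Fin n`, whose norm is the Frobenius norm and whose
inner product is the Frobenius inner product `:`). -/
noncomputable def Atens (n : ℕ) (q κ : ℝ) (ξ : EuclideanSpace ℝ (Fin n × Fin n)) :
    EuclideanSpace ℝ (Fin n × Fin n) :=
  ((κ + ‖ξ‖) ^ (q - 2)) • ξ

/-- The tensor `F(ξ) = (κ + |ξ|)^{(q−2)/2} ξ`. -/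
noncomputable def Ftens (n : ℕ) (q κ : ℝ) (ξ : EuclideanSpace ℝ (Fin n × Fin n)) :
    EuclideanSpace ℝ (Fin n × Fin n) :=
  ((κ + ‖ξ‖) ^ ((q - 2) / 2)) • ξ

open Real

theorem rpow_le_two_rpow_abs_mul_rpow {u v : ℝ} (γ : ℝ) (hv : 0 ≤ v) (huv : u ≤ 2 * v)
    (hvu : v ≤ 2 * u) : u ^ γ ≤ 2 ^ |γ| * v ^ γ := by
  rcases hv.eq_or_lt with rfl | hv
  · obtain rfl : u = 0 := by linarith
    exact le_mul_of_one_le_left (rpow_nonneg le_rfl γ) (one_le_rpow one_le_two (abs_nonneg γ))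
  rcases le_total 0 γ with hγ | hγ
  · calc u ^ γ ≤ (2 * v) ^ γ := rpow_le_rpow (by linarith) huv hγ
      _ = 2 ^ |γ| * v ^ γ := by rw [abs_of_nonneg hγ, mul_rpow zero_le_two hv.le]
  · calc u ^ γ ≤ (v / 2) ^ γ := rpow_le_rpow_of_nonpos (by positivity) (by linarith) hγ
      _ = 2 ^ |γ| * v ^ γ := by
        rw [abs_of_nonpos hγ, div_rpow hv.le zero_le_two, rpow_neg zero_le_two, div_eq_inv_mul]

theorem abs_rpow_sub_rpow_mul_le {a b γ : ℝ} (hγ : -1 ≤ γ) (hb : 0 ≤ b) (hba : b ≤ a) :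
    |a ^ γ - b ^ γ| * b ≤ |γ| * a ^ γ * (a - b) := by
  have ha : 0 ≤ a := hb.trans hba
  have hpos : 0 ≤ |γ| * a ^ γ * (a - b) :=
    mul_nonneg (mul_nonneg (abs_nonneg γ) (rpow_nonneg ha γ)) (sub_nonneg.2 hba)
  rcases hb.eq_or_lt with rfl | hb
  · simpa using hpos
  have ha : 0 < a := hb.trans_le hba
  have hab : -1 ≤ a / b - 1 := by have := div_pos ha hb; linarith
  rcases le_total 0 γ with hγ0 | hγ0
  · have hmono : b ^ γ ≤ a ^ γ := rpow_le_rpow hb.le hba hγ0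
    rw [abs_of_nonneg (sub_nonneg.2 hmono), abs_of_nonneg hγ0]
    rcases le_total γ 1 with hγ1 | hγ1
    · have h := rpow_one_add_le_one_add_mul_self hab hγ0 hγ1
      rw [add_sub_cancel, div_rpow ha.le hb.le, div_le_iff₀ (rpow_pos_of_pos hb γ)] at h
      have e : (1 + γ * (a / b - 1)) * b ^ γ * b = b ^ γ * b + γ * (a - b) * b ^ γ := by
        field_simp
      linarith [mul_le_mul_of_nonneg_right h hb.le,
        mul_le_mul_of_nonneg_left hmono (mul_nonneg hγ0 (sub_nonneg.2 hba))]
    · have hba' : -1 ≤ b / a - 1 := by have := div_pos hb ha; linarith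
      have h := one_add_mul_self_le_rpow_one_add hba' hγ1
      rw [add_sub_cancel, div_rpow hb.le ha.le, le_div_iff₀ (rpow_pos_of_pos ha γ)] at h
      have e : (1 + γ * (b / a - 1)) * a ^ γ * b
          = a ^ γ * b - γ * (a - b) * a ^ γ * (b / a) := by
        field_simp; ring
      have hq : b / a ≤ 1 := (div_le_one ha).2 hba
      have hc : 0 ≤ γ * (a - b) * a ^ γ :=
        mul_nonneg (mul_nonneg hγ0 (sub_nonneg.2 hba)) (rpow_nonneg ha.le γ)
      linarith [mul_le_mul_of_nonneg_right h hb.le, mul_le_mul_of_nonneg_left hq hc]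
  · have hmono : a ^ γ ≤ b ^ γ := rpow_le_rpow_of_nonpos hb hba hγ0
    rw [abs_of_nonpos (sub_nonpos.2 hmono), abs_of_nonpos hγ0]
    have h := rpow_one_add_le_one_add_mul_self hab (neg_nonneg.2 hγ0) (by linarith)
    rw [add_sub_cancel, rpow_neg (div_pos ha hb).le, div_rpow ha.le hb.le, inv_div,
      div_le_iff₀ (rpow_pos_of_pos ha γ)] at h
    have e : (1 + -γ * (a / b - 1)) * a ^ γ * b = a ^ γ * b - γ * (a - b) * a ^ γ := by
      field_simp; ring
    linarith [mul_le_mul_of_nonneg_right h hb.le]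

theorem rpow_mul_sub_rpow_mul_bounds {γ κ x y : ℝ} (hγ : -1 ≤ γ) (hκ : 0 ≤ κ)
    (hy : 0 ≤ y) (hyx : y ≤ x) :
    min 1 (1 + γ) * ((κ + x) ^ γ * (x - y)) ≤ (κ + x) ^ γ * x - (κ + y) ^ γ * y ∧
      (κ + x) ^ γ * x - (κ + y) ^ γ * y ≤ max 1 (1 + γ) * ((κ + x) ^ γ * (x - y)) := by
  set T := ((κ + x) ^ γ - (κ + y) ^ γ) * y
  have hb : 0 ≤ κ + y := by linarith
  have hT : |T| ≤ |γ| * ((κ + x) ^ γ * (x - y)) := by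
    have h := abs_rpow_sub_rpow_mul_le hγ hb (by linarith : κ + y ≤ κ + x)
    rw [show κ + x - (κ + y) = x - y by ring] at h
    rw [abs_mul, abs_of_nonneg hy]
    linarith [mul_le_mul_of_nonneg_left (by linarith : y ≤ κ + y)
      (abs_nonneg ((κ + x) ^ γ - (κ + y) ^ γ))]
  rw [show (κ + x) ^ γ * x - (κ + y) ^ γ * y = (κ + x) ^ γ * (x - y) + T by ring]
  rcases le_total 0 γ with hγ0 | hγ0
  · have hT0 : 0 ≤ T :=
      mul_nonneg (sub_nonneg.2 (rpow_le_rpow hb (by linarith) hγ0)) hy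
    rw [abs_of_nonneg hγ0] at hT
    rw [min_eq_left (by linarith), max_eq_right (by linarith)]
    constructor <;> linarith [le_abs_self T]
  · have hT0 : T ≤ 0 := by
      rcases hy.eq_or_lt with rfl | hy
      · simp [T]
      exact mul_nonpos_of_nonpos_of_nonneg
        (sub_nonpos.2 (rpow_le_rpow_of_nonpos (by linarith) (by linarith) hγ0)) hy.le
    rw [abs_of_nonpos hγ0] at hT
    rw [min_eq_right (by linarith), max_eq_left (by linarith)]
    constructor <;> linarith [neg_abs_le T]

section PowerMap

variable {E : Type*} [NormedAddCommGroup E] [InnerProductSpace ℝ E]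

noncomputable def powerMap (γ κ : ℝ) (ξ : E) : E := (κ + ‖ξ‖) ^ γ • ξ

theorem powerMap_neg (γ κ : ℝ) (ξ : E) : powerMap γ κ (-ξ) = -powerMap γ κ ξ := by
  simp [powerMap]

theorem powerMap_real (γ κ x : ℝ) : powerMap γ κ x = (κ + |x|) ^ γ * x := rfl

theorem powerMap_sub_bounds_of_abs_le {γ κ x y : ℝ} (hγ : -1 ≤ γ) (hκ : 0 ≤ κ)
    (hyx : |y| ≤ x) :
    min 1 (1 + γ) / 2 * ((κ + x) ^ γ * (x - y)) ≤ powerMap γ κ x - powerMap γ κ y ∧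
      powerMap γ κ x - powerMap γ κ y ≤ 2 * max 1 (1 + γ) * ((κ + x) ^ γ * (x - y)) := by
  obtain ⟨hxy, hyx⟩ := abs_le.1 hyx
  have hx : 0 ≤ x := by linarith
  have hw : 0 ≤ (κ + x) ^ γ * (x - y) := mul_nonneg (rpow_nonneg (by linarith) γ) (by linarith)
  have hm : 0 ≤ min 1 (1 + γ) := le_min zero_le_one (by linarith)
  have hm1 : min 1 (1 + γ) ≤ 1 := min_le_left _ _
  have hM1 : 1 ≤ max 1 (1 + γ) := le_max_left _ _
  rw [powerMap_real, powerMap_real, abs_of_nonneg hx]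
  rcases le_total 0 y with hy | hy
  · obtain ⟨h1, h2⟩ := rpow_mul_sub_rpow_mul_bounds hγ hκ hy hyx
    rw [abs_of_nonneg hy]
    constructor <;> linarith [mul_nonneg hm hw, mul_nonneg (zero_le_one.trans hM1) hw]
  · have ha : 0 ≤ (κ + x) ^ γ := rpow_nonneg (by linarith) γ
    have hmono :=
      (rpow_mul_sub_rpow_mul_bounds hγ hκ (neg_nonneg.2 hy) (by linarith : -y ≤ x)).1
    have hmono' : (κ + -y) ^ γ * -y ≤ (κ + x) ^ γ * x := by
      linarith [mul_nonneg hm (mul_nonneg ha (by linarith : 0 ≤ x + y))]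
    have hz : 0 ≤ (κ + -y) ^ γ * -y := mul_nonneg (rpow_nonneg (by linarith) γ) (by linarith)
    rw [abs_of_nonpos hy]
    constructor
    · linarith [mul_nonneg ha (by linarith : 0 ≤ x + y), mul_nonneg (sub_nonneg.2 hm1) hw]
    · linarith [mul_nonneg ha (by linarith : 0 ≤ -y), mul_nonneg (sub_nonneg.2 hM1) hw]

theorem exists_powerMap_sub_bounds {γ κ : ℝ} (hγ : -1 < γ) (hκ : 0 ≤ κ) :
    ∃ c > 0, ∃ C > 0, ∀ x y : ℝ, y ≤ x →
      c * ((κ + |x| + |y|) ^ γ * (x - y)) ≤ powerMap γ κ x - powerMap γ κ y ∧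
        powerMap γ κ x - powerMap γ κ y ≤ C * ((κ + |x| + |y|) ^ γ * (x - y)) := by
  have hm : 0 < min 1 (1 + γ) := lt_min one_pos (by linarith)
  refine ⟨min 1 (1 + γ) / 2 / 2 ^ |γ|, by positivity, 2 * max 1 (1 + γ) * 2 ^ |γ|,
    by positivity, fun x y hyx => ?_⟩
  -- `powerMap γ κ` is odd, so we may assume `|y| ≤ x`
  wlog hxy : 0 ≤ x + y generalizing x y
  · obtain ⟨h1, h2⟩ := this (-y) (-x) (by linarith) (by linarith)
    rw [powerMap_neg, powerMap_neg, abs_neg, abs_neg, add_right_comm κ |y|, neg_sub_neg,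
      neg_sub_neg] at h1 h2
    exact ⟨h1, h2⟩
  have hy : |y| ≤ x := abs_le.2 ⟨by linarith, hyx⟩
  have hx : 0 ≤ x := (abs_nonneg y).trans hy
  obtain ⟨h1, h2⟩ := powerMap_sub_bounds_of_abs_le hγ.le hκ hy
  have hy0 := abs_nonneg y
  rw [abs_of_nonneg hx]
  have hS : (κ + x + |y|) ^ γ ≤ 2 ^ |γ| * (κ + x) ^ γ :=
    rpow_le_two_rpow_abs_mul_rpow γ (by linarith) (by linarith) (by linarith)
  have hS' : (κ + x) ^ γ ≤ 2 ^ |γ| * (κ + x + |y|) ^ γ :=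
    rpow_le_two_rpow_abs_mul_rpow γ (by linarith) (by linarith) (by linarith)
  constructor
  · calc min 1 (1 + γ) / 2 / 2 ^ |γ| * ((κ + x + |y|) ^ γ * (x - y))
        ≤ min 1 (1 + γ) / 2 / 2 ^ |γ| * (2 ^ |γ| * (κ + x) ^ γ * (x - y)) := by gcongr
      _ = min 1 (1 + γ) / 2 * ((κ + x) ^ γ * (x - y)) := by field_simp
      _ ≤ _ := h1
  · calc powerMap γ κ x - powerMap γ κ y
        ≤ 2 * max 1 (1 + γ) * ((κ + x) ^ γ * (x - y)) := h2
      _ ≤ 2 * max 1 (1 + γ) * (2 ^ |γ| * (κ + x + |y|) ^ γ * (x - y)) := by gcongr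
      _ = _ := by ring

theorem exists_powerMap_sub_mul_sub_bounds {γ κ : ℝ} (hγ : -1 < γ) (hκ : 0 ≤ κ) :
    ∃ c > 0, ∃ C > 0, ∀ x y : ℝ,
      c * ((κ + |x| + |y|) ^ γ * (x - y) ^ 2) ≤
          (powerMap γ κ x - powerMap γ κ y) * (x - y) ∧
        (powerMap γ κ x - powerMap γ κ y) * (x - y) ≤
          C * ((κ + |x| + |y|) ^ γ * (x - y) ^ 2) := by
  obtain ⟨c, hc, C, hC, h⟩ := exists_powerMap_sub_bounds hγ hκ
  refine ⟨c, hc, C, hC, fun x y => ?_⟩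
  wlog hyx : y ≤ x generalizing x y
  · obtain ⟨h1, h2⟩ := this y x (le_of_not_ge hyx)
    rw [add_right_comm κ |y|, ← neg_sub x y, ← neg_sub (powerMap γ κ x), neg_sq,
      neg_mul_neg] at h1 h2
    exact ⟨h1, h2⟩
  obtain ⟨h1, h2⟩ := h x y hyx
  have hd : 0 ≤ x - y := by linarith
  constructor
  · calc c * ((κ + |x| + |y|) ^ γ * (x - y) ^ 2)
        = c * ((κ + |x| + |y|) ^ γ * (x - y)) * (x - y) := by ring
      _ ≤ _ := mul_le_mul_of_nonneg_right h1 hd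
  · calc (powerMap γ κ x - powerMap γ κ y) * (x - y)
        ≤ C * ((κ + |x| + |y|) ^ γ * (x - y)) * (x - y) := mul_le_mul_of_nonneg_right h2 hd
      _ = _ := by ring

theorem exists_powerMap_sub_sq_bounds {γ κ : ℝ} (hγ : -1 < γ) (hκ : 0 ≤ κ) :
    ∃ c > 0, ∃ C > 0, ∀ x y : ℝ,
      c * ((κ + |x| + |y|) ^ (2 * γ) * (x - y) ^ 2) ≤ (powerMap γ κ x - powerMap γ κ y) ^ 2 ∧
        (powerMap γ κ x - powerMap γ κ y) ^ 2 ≤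
          C * ((κ + |x| + |y|) ^ (2 * γ) * (x - y) ^ 2) := by
  obtain ⟨c, hc, C, hC, h⟩ := exists_powerMap_sub_bounds hγ hκ
  refine ⟨c ^ 2, by positivity, C ^ 2, by positivity, fun x y => ?_⟩
  wlog hyx : y ≤ x generalizing x y
  · obtain ⟨h1, h2⟩ := this y x (le_of_not_ge hyx)
    rw [add_right_comm κ |y|, ← neg_sub x y, ← neg_sub (powerMap γ κ x), neg_sq, neg_sq]
      at h1 h2
    exact ⟨h1, h2⟩
  obtain ⟨h1, h2⟩ := h x y hyx
  have hS : 0 ≤ κ + |x| + |y| := by positivity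
  have hlow : 0 ≤ c * ((κ + |x| + |y|) ^ γ * (x - y)) :=
    mul_nonneg hc.le (mul_nonneg (rpow_nonneg hS γ) (by linarith))
  have e : ∀ k : ℝ, (k * ((κ + |x| + |y|) ^ γ * (x - y))) ^ 2
      = k ^ 2 * ((κ + |x| + |y|) ^ (2 * γ) * (x - y) ^ 2) := fun k => by
    rw [mul_comm 2 γ, rpow_mul hS, rpow_two]; ring
  rw [← e, ← e]
  exact ⟨pow_le_pow_left₀ hlow h1 2, pow_le_pow_left₀ (hlow.trans h1) h2 2⟩

theorem exists_inner_smul_sub_smul_eq (P Q : E) : ∃ t ∈ Set.Icc (0 : ℝ) 1, ∀ a b c d : ℝ,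
    inner ℝ (a • P - b • Q) (c • P - d • Q) =
      t * ((a * ‖P‖ - b * ‖Q‖) * (c * ‖P‖ - d * ‖Q‖)) +
        (1 - t) * ((a * ‖P‖ - b * -‖Q‖) * (c * ‖P‖ - d * -‖Q‖)) := by
  set s := inner ℝ P Q / (‖P‖ * ‖Q‖)
  have hs : |s| ≤ 1 := by
    rw [abs_div, abs_of_nonneg (mul_nonneg (norm_nonneg P) (norm_nonneg Q))]
    exact div_le_one_of_le₀ (abs_real_inner_le_norm P Q) (by positivity)
  have hPQ : inner ℝ P Q = s * (‖P‖ * ‖Q‖) := by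
    rcases eq_or_ne (‖P‖ * ‖Q‖) 0 with h | h
    · rw [h, mul_zero]
      simpa [h] using abs_real_inner_le_norm P Q
    · exact (div_mul_cancel₀ _ h).symm
  obtain ⟨hs₁, hs₂⟩ := abs_le.1 hs
  refine ⟨(1 + s) / 2, ⟨by linarith, by linarith⟩, fun a b c d => ?_⟩
  simp only [inner_sub_left, inner_sub_right, real_inner_smul_left, real_inner_smul_right,
    real_inner_self_eq_norm_sq, real_inner_comm P Q, hPQ]
  ring

theorem inner_radial_sub_bounds_of_real {α β : ℝ → ℝ} {ω : ℝ → ℝ → ℝ} {c C : ℝ}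
    (h : ∀ x y : ℝ,
      c * (ω |x| |y| * (x - y) ^ 2) ≤ (α |x| * x - α |y| * y) * (β |x| * x - β |y| * y) ∧
        (α |x| * x - α |y| * y) * (β |x| * x - β |y| * y) ≤ C * (ω |x| |y| * (x - y) ^ 2))
    (P Q : E) :
    c * (ω ‖P‖ ‖Q‖ * ‖P - Q‖ ^ 2) ≤
        inner ℝ (α ‖P‖ • P - α ‖Q‖ • Q) (β ‖P‖ • P - β ‖Q‖ • Q) ∧
      inner ℝ (α ‖P‖ • P - α ‖Q‖ • Q) (β ‖P‖ • P - β ‖Q‖ • Q) ≤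
        C * (ω ‖P‖ ‖Q‖ * ‖P - Q‖ ^ 2) := by
  obtain ⟨t, ⟨ht₀, ht₁⟩, ht⟩ := exists_inner_smul_sub_smul_eq P Q
  have hN := ht 1 1 1 1
  simp only [one_smul, one_mul, real_inner_self_eq_norm_sq] at hN
  obtain ⟨h₁, h₂⟩ := h ‖P‖ ‖Q‖
  obtain ⟨h₃, h₄⟩ := h ‖P‖ (-‖Q‖)
  simp only [abs_norm, abs_neg] at h₁ h₂ h₃ h₄
  rw [ht, hN]
  have ht₁' : 0 ≤ 1 - t := by linarith
  constructor
  · linarith [mul_le_mul_of_nonneg_left h₁ ht₀, mul_le_mul_of_nonneg_left h₃ ht₁']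
  · linarith [mul_le_mul_of_nonneg_left h₂ ht₀, mul_le_mul_of_nonneg_left h₄ ht₁']

theorem exists_inner_powerMap_sub_bounds {γ κ : ℝ} (hγ : -1 < γ) (hκ : 0 ≤ κ) :
    ∃ c > 0, ∃ C > 0, ∀ P Q : E,
      c * ((κ + ‖P‖ + ‖Q‖) ^ γ * ‖P - Q‖ ^ 2) ≤
          inner ℝ (powerMap γ κ P - powerMap γ κ Q) (P - Q) ∧
        inner ℝ (powerMap γ κ P - powerMap γ κ Q) (P - Q) ≤
          C * ((κ + ‖P‖ + ‖Q‖) ^ γ * ‖P - Q‖ ^ 2) := by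
  obtain ⟨c, hc, C, hC, h⟩ := exists_powerMap_sub_mul_sub_bounds hγ hκ
  refine ⟨c, hc, C, hC, fun P Q => ?_⟩
  simpa [powerMap] using inner_radial_sub_bounds_of_real (α := fun s => (κ + s) ^ γ)
    (β := fun _ => 1) (ω := fun s r => (κ + s + r) ^ γ)
    (fun x y => by simpa [powerMap_real] using h x y) P Q

theorem exists_norm_powerMap_sub_sq_bounds {γ κ : ℝ} (hγ : -1 < γ) (hκ : 0 ≤ κ) :
    ∃ c > 0, ∃ C > 0, ∀ P Q : E,
      c * ((κ + ‖P‖ + ‖Q‖) ^ (2 * γ) * ‖P - Q‖ ^ 2) ≤ ‖powerMap γ κ P - powerMap γ κ Q‖ ^ 2 ∧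
        ‖powerMap γ κ P - powerMap γ κ Q‖ ^ 2 ≤
          C * ((κ + ‖P‖ + ‖Q‖) ^ (2 * γ) * ‖P - Q‖ ^ 2) := by
  obtain ⟨c, hc, C, hC, h⟩ := exists_powerMap_sub_sq_bounds hγ hκ
  refine ⟨c, hc, C, hC, fun P Q => ?_⟩
  rw [← real_inner_self_eq_norm_sq (powerMap γ κ P - powerMap γ κ Q)]
  exact inner_radial_sub_bounds_of_real (α := fun s => (κ + s) ^ γ) (β := fun s => (κ + s) ^ γ)
    (ω := fun s r => (κ + s + r) ^ (2 * γ))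
    (fun x y => by simpa [sq, powerMap_real] using h x y) P Q

end PowerMap

theorem bounds_of_common_comparison {I G V c C c' C' : ℝ} (hc : 0 ≤ c) (hC : 0 ≤ C)
    (hc' : 0 < c') (hC' : 0 < C') (hV : 0 ≤ V) (hI : c * V ≤ I ∧ I ≤ C * V)
    (hG : c' * V ≤ G ∧ G ≤ C' * V) :
    min c (c / C') * G ≤ I ∧ I ≤ max C (C / c') * G ∧
      min c (c / C') * V ≤ I ∧ I ≤ max C (C / c') * V := by
  obtain ⟨hI₁, hI₂⟩ := hI
  obtain ⟨hG₁, hG₂⟩ := hG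
  have hG0 : 0 ≤ G := (mul_nonneg hc'.le hV).trans hG₁
  refine ⟨?_, ?_, ?_, ?_⟩
  · calc min c (c / C') * G ≤ c / C' * G := by gcongr; exact min_le_right _ _
      _ ≤ c / C' * (C' * V) := by gcongr
      _ = c * V := by field_simp
      _ ≤ I := hI₁
  · calc I ≤ C * V := hI₂
      _ = C / c' * (c' * V) := by field_simp
      _ ≤ C / c' * G := by gcongr
      _ ≤ max C (C / c') * G := by gcongr; exact le_max_right _ _
  · exact (mul_le_mul_of_nonneg_right (min_le_left _ _) hV).trans hI₁
  · exact hI₂.trans (mul_le_mul_of_nonneg_right (le_max_left _ _) hV)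

/-- the "hammer" lemma for the model tensors. For `q ∈ (1,∞)`
and `κ ∈ [0,1]`, uniformly in `P, Q ∈ ℝ^{n×n}`:
`(A(P) − A(Q)) : (P − Q) ∼ |F(P) − F(Q)|² ∼ (κ + |P| + |Q|)^{q−2} |P − Q|²`,
with constants depending only on `q`. -/
theorem statement11 (n : ℕ) (q κ : ℝ) (hq : 1 < q) (hκ : κ ∈ Set.Icc (0:ℝ) 1) :
    ∃ c₁ > 0, ∃ c₂ > 0, ∀ P Q : EuclideanSpace ℝ (Fin n × Fin n),
      c₁ * ‖Ftens n q κ P - Ftens n q κ Q‖ ^ 2 ≤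
        (inner ℝ (Atens n q κ P - Atens n q κ Q) (P - Q) : ℝ) ∧
      (inner ℝ (Atens n q κ P - Atens n q κ Q) (P - Q) : ℝ) ≤
        c₂ * ‖Ftens n q κ P - Ftens n q κ Q‖ ^ 2 ∧
      c₁ * ((κ + ‖P‖ + ‖Q‖) ^ (q - 2) * ‖P - Q‖ ^ 2) ≤
        (inner ℝ (Atens n q κ P - Atens n q κ Q) (P - Q) : ℝ) ∧
      (inner ℝ (Atens n q κ P - Atens n q κ Q) (P - Q) : ℝ) ≤
        c₂ * ((κ + ‖P‖ + ‖Q‖) ^ (q - 2) * ‖P - Q‖ ^ 2) := by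
  obtain ⟨c, hc, C, hC, hA⟩ := exists_inner_powerMap_sub_bounds
    (E := EuclideanSpace ℝ (Fin n × Fin n)) (γ := q - 2) (by linarith) hκ.1
  obtain ⟨c', hc', C', hC', hF⟩ := exists_norm_powerMap_sub_sq_bounds
    (E := EuclideanSpace ℝ (Fin n × Fin n)) (γ := (q - 2) / 2) (by linarith) hκ.1
  rw [mul_div_cancel₀ _ two_ne_zero] at hF
  refine ⟨min c (c / C'), lt_min hc (div_pos hc hC'), max C (C / c'), lt_max_of_lt_left hC,
    fun P Q => ?_⟩
  have hV : 0 ≤ (κ + ‖P‖ + ‖Q‖) ^ (q - 2) * ‖P - Q‖ ^ 2 := by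
    have := hκ.1
    positivity
  exact bounds_of_common_comparison hc.le hC.le hc' hC' hV (hA P Q) (hF P Q)
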